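/- Fix a finite set S with at least 4 elements, a strategy τ for Ben (a function assigning a symbol of S to every finite sequence over S), and M ≥ 1. For r = (r_1,…,r_M) ∈ S^M, consider the play of the erase-repetition game of 2M moves in which Ann's j-th move is r_j and every Ben move is given by τ applied to the current sequence; call r admissible if each r_j differs from each of the last three symbols of the current sequence before Ann's j-th move (or from all its symbols if it has fewer than three terms). For a play, let h_j denote the length of the current sequence after j moves (including the erasure invoked by that move, if any), set d_1 = 1 and d_j = h_j − h_{j−1} for 2 ≤ j ≤ 2M, and define the reduced log of r as the pair consisting of the subsequence of (d_1,…,d_{2M}) obtained by deleting all entries equal to 0, together with the current sequence after 2M moves. Then the map sending an admissible r to its reduced log is injective: two distinct admissible sequences of Ann's choices have distinct reduced logs. -/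

import Mathlib

/-!
Erasing the second half of a repeated suffix can be undone by copying back the last symbols
that remain, so the sequence after a move and the length change of that move determine the
sequence before it; a move that leaves the length unchanged leaves the sequence unchanged, and by
admissibility Ann's moves always change the length. Walking two plays with the same reduced log
backwards from their common final sequence, skipping the moves of length change `0`, they stay
in lockstep: if one play reached the first move where the plays differ while the other is
further on, the other play would have made an Ann move of length change `0`.
Hence the plays pass through the same sequences, and Ann's `j`-th choice is the last symbol of
the sequence after her `j`-th move.
-/

/-- The last `2*h` terms of `l` form a repetition of size `h` (`h ≥ 1`),
i.e. `l` has a suffix of the form `x₁…x_h x₁…x_h`. -/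
def SuffixRep {S : Type*} (l : List S) (h : ℕ) : Prop :=
  1 ≤ h ∧ 2 * h ≤ l.length ∧
    (l.drop (l.length - 2 * h)).take h = l.drop (l.length - h)

instance {S : Type*} [DecidableEq S] (l : List S) (h : ℕ) :
    Decidable (SuffixRep l h) := by
  unfold SuffixRep; infer_instance

/-- The size of the shortest repeated suffix of `l` (`0` if there is none). -/
def minRep {S : Type*} [DecidableEq S] (l : List S) : ℕ :=
  ((((List.range (l.length + 1)).filter fun h => decide (SuffixRep l h))).head?).getD 0

/-- Erase the second half of the shortest repeated suffix of `l`
(if `l` has no repeated suffix, `l` is left unchanged). -/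
def eraseRep {S : Type*} [DecidableEq S] (l : List S) : List S :=
  l.take (l.length - minRep l)

/-- The current sequence after `j` moves of the play of the erase-repetition
game in which Ann's `(i+1)`-st move is `r i` and each move of Ben is given by
the strategy `τ` applied to the current sequence; Ann moves first and the
players alternate. -/
def annPlay {S : Type*} [DecidableEq S] (τ : List S → S) (r : ℕ → S) : ℕ → List S
  | 0 => []
  | j + 1 =>
      let l := annPlay τ r j
      eraseRep (l ++ [if j % 2 = 0 then r (j / 2) else τ l])

/-- `r` is admissible if each of Ann's choices differs from each of the last
three symbols of the current sequence before her move (or from all its symbols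
if it has fewer than three terms). -/
def Admissible {S : Type*} [DecidableEq S] (τ : List S → S) (r : ℕ → S)
    (M : ℕ) : Prop :=
  ∀ j < M, r j ∉ (annPlay τ r (2 * j)).reverse.take 3

/-- The reduced log of the `2*M`-move play determined by `τ` and Ann's choices
`r`: the sequence of differences of lengths of consecutive current sequences
(with `d 1 = 1`) with all zero entries deleted, together with the current
sequence after `2*M` moves. -/
def reducedLog {S : Type*} [DecidableEq S] (τ : List S → S) (r : ℕ → S)
    (M : ℕ) : List ℤ × List S :=
  (((List.range (2 * M)).map fun j =>
      ((annPlay τ r (j + 1)).length : ℤ) - ((annPlay τ r j).length : ℤ)).filter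
      (fun d => decide (d ≠ 0)),
    annPlay τ r (2 * M))

section EraseRep

variable {S : Type*}

theorem getLast?_eq_of_suffixRep_one {l : List S} {x : S} (h : SuffixRep (l ++ [x]) 1) :
    l.getLast? = some x := by
  obtain ⟨-, hlen, hrep⟩ := h
  simp only [List.length_append, List.length_singleton] at hlen hrep
  have := congrArg List.head? hrep
  rw [List.head?_take, List.head?_drop, List.head?_drop, if_neg (by omega),
    List.getElem?_append_left (by omega), add_tsub_cancel_right,
    List.getElem?_concat_length] at this
  rw [List.getLast?_eq_getElem?, ← this, show l.length + 1 - 2 * 1 = l.length - 1 by omega]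

variable [DecidableEq S]

theorem minRep_eq_zero_or_suffixRep (l : List S) : minRep l = 0 ∨ SuffixRep l (minRep l) := by
  unfold minRep
  cases hh : ((List.range (l.length + 1)).filter fun h => decide (SuffixRep l h)).head? with
  | none => exact .inl rfl
  | some a =>
    have ha := List.mem_of_mem_head? hh
    simp only [List.mem_filter, decide_eq_true_eq] at ha
    exact .inr ha.2

theorem minRep_le_length (l : List S) : minRep l ≤ l.length := by
  rcases minRep_eq_zero_or_suffixRep l with h | h
  · omega
  · have := h.2.1; omega

theorem length_eraseRep (l : List S) : (eraseRep l).length = l.length - minRep l := by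
  simp [eraseRep]

theorem eraseRep_append_drop (l : List S) :
    eraseRep l ++ (eraseRep l).drop ((eraseRep l).length - minRep l) = l := by
  rcases minRep_eq_zero_or_suffixRep l with h0 | ⟨-, hlen, hrep⟩
  · simp [eraseRep, h0]
  · rw [length_eraseRep, eraseRep, List.drop_take,
      show l.length - minRep l - minRep l = l.length - 2 * minRep l by omega,
      show l.length - minRep l - (l.length - 2 * minRep l) = minRep l by omega, hrep,
      List.take_append_drop]

theorem eq_of_eraseRep_eq {l l' : List S} (he : eraseRep l = eraseRep l')
    (hlen : l.length = l'.length) : l = l' := by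
  have hm : minRep l = minRep l' := by
    have h := congrArg List.length he
    rw [length_eraseRep, length_eraseRep] at h
    have := minRep_le_length l
    have := minRep_le_length l'
    omega
  rw [← eraseRep_append_drop l, ← eraseRep_append_drop l', he, hm]

theorem getLast?_eraseRep (l : List S) : (eraseRep l).getLast? = l.getLast? := by
  conv_rhs => rw [← eraseRep_append_drop l]
  rw [List.getLast?_append, List.getLast?_drop]
  split <;> simp

theorem eraseRep_append_singleton_of_length_eq {l : List S} {x : S}
    (h : (eraseRep (l ++ [x])).length = l.length) : eraseRep (l ++ [x]) = l := by
  rw [eraseRep, show (l ++ [x]).length - minRep (l ++ [x]) = l.length by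
    rw [← h, length_eraseRep], List.take_left]

theorem length_eraseRep_append_singleton_ne {l : List S} {x : S} (hx : l.getLast? ≠ some x) :
    (eraseRep (l ++ [x])).length ≠ l.length := by
  intro h
  have hle := minRep_le_length (l ++ [x])
  rw [length_eraseRep] at h
  simp only [List.length_append, List.length_singleton] at h hle
  rcases minRep_eq_zero_or_suffixRep (l ++ [x]) with h0 | hrep
  · omega
  · rw [show minRep (l ++ [x]) = 1 by omega] at hrep
    exact hx (getLast?_eq_of_suffixRep_one hrep)

end EraseRep

section Play

variable {S : Type*} [DecidableEq S] (τ : List S → S) (r r' : ℕ → S)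

-- `lengthDiff τ r j` is the paper's `d_{j+1}`; `d_1 = 1` holds since `annPlay τ r 0 = []`.
def lengthDiff (j : ℕ) : ℤ := (annPlay τ r (j + 1)).length - (annPlay τ r j).length

def partialLog (j : ℕ) : List ℤ :=
  ((List.range j).map (lengthDiff τ r)).filter fun d => decide (d ≠ 0)

def PlaysAgree (m m' : ℕ) : Prop :=
  annPlay τ r m = annPlay τ r' m' ∧ partialLog τ r m = partialLog τ r' m'

theorem reducedLog_eq (M : ℕ) :
    reducedLog τ r M = (partialLog τ r (2 * M), annPlay τ r (2 * M)) := rfl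

theorem annPlay_succ (j : ℕ) : annPlay τ r (j + 1) =
    eraseRep (annPlay τ r j ++ [if j % 2 = 0 then r (j / 2) else τ (annPlay τ r j)]) := rfl

theorem annPlay_two_mul_add_one (k : ℕ) :
    annPlay τ r (2 * k + 1) = eraseRep (annPlay τ r (2 * k) ++ [r k]) := by
  rw [annPlay_succ, if_pos (by omega), Nat.mul_div_cancel_left k two_pos]

theorem getLast?_annPlay_two_mul_add_one (k : ℕ) :
    (annPlay τ r (2 * k + 1)).getLast? = some (r k) := by
  rw [annPlay_two_mul_add_one, getLast?_eraseRep, List.getLast?_concat]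

variable {τ r r'}

theorem annPlay_succ_eq_of_odd {j : ℕ} (hj : j % 2 = 1) (h : annPlay τ r j = annPlay τ r' j) :
    annPlay τ r (j + 1) = annPlay τ r' (j + 1) := by
  rw [annPlay_succ, annPlay_succ, if_neg (by omega), if_neg (by omega), h]

theorem annPlay_succ_eq_of_lengthDiff_eq_zero {j : ℕ} (h : lengthDiff τ r j = 0) :
    annPlay τ r (j + 1) = annPlay τ r j := by
  unfold lengthDiff at h
  rw [annPlay_succ] at h ⊢
  exact eraseRep_append_singleton_of_length_eq (by omega)

theorem lengthDiff_two_mul_ne_zero {M k : ℕ} (hr : Admissible τ r M) (hk : k < M) :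
    lengthDiff τ r (2 * k) ≠ 0 := by
  have hlast : (annPlay τ r (2 * k)).getLast? ≠ some (r k) := fun h =>
    hr k hk <| List.mem_of_mem_head? <| by
      rwa [List.head?_take, if_neg (by omega), List.head?_reverse]
  have := length_eraseRep_append_singleton_ne hlast
  rw [← annPlay_two_mul_add_one] at this
  unfold lengthDiff
  omega

theorem partialLog_succ (j : ℕ) : partialLog τ r (j + 1) =
    partialLog τ r j ++ if lengthDiff τ r j = 0 then [] else [lengthDiff τ r j] := by
  rw [partialLog, List.range_succ, List.map_append, List.filter_append]
  split_ifs with h <;> simp [partialLog, h]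

theorem partialLog_prefix_of_le {j j' : ℕ} (h : j ≤ j') :
    partialLog τ r j <+: partialLog τ r j' := by
  induction j', h using Nat.le_induction with
  | base => exact List.prefix_refl _
  | succ j' _ ih => exact ih.trans (by rw [partialLog_succ]; exact List.prefix_append _ _)

theorem lengthDiff_eq_zero_of_partialLog_eq {a b i : ℕ}
    (h : partialLog τ r a = partialLog τ r b) (hai : a ≤ i) (hib : i < b) :
    lengthDiff τ r i = 0 := by
  by_contra hne
  have h1 := (partialLog_prefix_of_le (r := r) (τ := τ) hai).length_le
  have h2 := (partialLog_prefix_of_le (r := r) (τ := τ) (Nat.succ_le_of_lt hib)).length_le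
  rw [partialLog_succ, if_neg hne, List.length_append, List.length_singleton, ← h] at h2
  omega

theorem PlaysAgree.symm {m m' : ℕ} (h : PlaysAgree τ r r' m m') : PlaysAgree τ r' r m' m :=
  ⟨h.1.symm, h.2.symm⟩

theorem PlaysAgree.of_succ_left {a m' : ℕ} (h : PlaysAgree τ r r' (a + 1) m')
    (ha : lengthDiff τ r a = 0) : PlaysAgree τ r r' a m' := by
  rw [PlaysAgree, annPlay_succ_eq_of_lengthDiff_eq_zero ha, partialLog_succ, if_pos ha,
    List.append_nil] at h
  exact h

theorem PlaysAgree.of_succ {a b : ℕ} (h : PlaysAgree τ r r' (a + 1) (b + 1))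
    (ha : lengthDiff τ r a ≠ 0) (hb : lengthDiff τ r' b ≠ 0) : PlaysAgree τ r r' a b := by
  obtain ⟨hs, hl⟩ := h
  rw [partialLog_succ, partialLog_succ, if_neg ha, if_neg hb] at hl
  obtain ⟨hl, hd⟩ := List.append_inj' hl rfl
  have hd : lengthDiff τ r a = lengthDiff τ r' b := List.singleton_inj.mp hd
  have hlen : (annPlay τ r a).length = (annPlay τ r' b).length := by
    have := congrArg List.length hs
    unfold lengthDiff at hd
    omega
  rw [annPlay_succ, annPlay_succ] at hs
  have := eq_of_eraseRep_eq hs (by simp [hlen])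
  exact ⟨(List.append_inj' this rfl).1, hl⟩

theorem PlaysAgree.exists_left_or_right_eq {p m m' : ℕ} (h : PlaysAgree τ r r' m m')
    (hm : p ≤ m) (hm' : p ≤ m') :
    (∃ i', p ≤ i' ∧ i' ≤ m' ∧ PlaysAgree τ r r' p i') ∨
      ∃ i, p ≤ i ∧ i ≤ m ∧ PlaysAgree τ r r' i p := by
  obtain rfl | hm := eq_or_lt_of_le hm
  · exact .inl ⟨m', hm', le_rfl, h⟩
  obtain rfl | hm' := eq_or_lt_of_le hm'
  · exact .inr ⟨m, hm.le, le_rfl, h⟩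
  obtain ⟨a, rfl⟩ := Nat.exists_eq_add_one_of_ne_zero (Nat.ne_zero_of_lt hm)
  obtain ⟨b, rfl⟩ := Nat.exists_eq_add_one_of_ne_zero (Nat.ne_zero_of_lt hm')
  by_cases ha : lengthDiff τ r a = 0
  · have := (h.of_succ_left ha).exists_left_or_right_eq (p := p) (by omega) (by omega)
    grind
  by_cases hb : lengthDiff τ r' b = 0
  · have := (h.symm.of_succ_left hb).symm.exists_left_or_right_eq (p := p) (by omega) (by omega)
    grind
  have := (h.of_succ ha hb).exists_left_or_right_eq (p := p) (by omega) (by omega)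
  grind
termination_by m + m'

theorem PlaysAgree.succ_of_annPlay_eq {j : ℕ} (h : PlaysAgree τ r r' j j)
    (hs : annPlay τ r (j + 1) = annPlay τ r' (j + 1)) : PlaysAgree τ r r' (j + 1) (j + 1) := by
  refine ⟨hs, ?_⟩
  rw [partialLog_succ, partialLog_succ, h.2, lengthDiff, lengthDiff, hs, h.1]

/-- If the second play caught up with the first one at a later move `m'`, every move in between
would leave the length unchanged. Move `2k+2` is Ann's and changes it, so `m' = 2k+2` and
Ben's move `2k+1` changed nothing, contradicting `hne`. -/
theorem not_playsAgree_two_mul_add_one {M k m' : ℕ} (hr : Admissible τ r M)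
    (hr' : Admissible τ r' M) (h₀ : PlaysAgree τ r r' (2 * k) (2 * k))
    (hne : annPlay τ r (2 * k + 1) ≠ annPlay τ r' (2 * k + 1)) (hm' : 2 * k + 1 ≤ m')
    (hm'M : m' ≤ 2 * M) : ¬ PlaysAgree τ r r' (2 * k + 1) m' := by
  rintro ⟨hs, hl⟩
  have hk : k < M := by omega
  have hlog : partialLog τ r' (2 * k + 1) = partialLog τ r' m' := by
    refine (partialLog_prefix_of_le hm').eq_of_length ?_
    rw [← hl, partialLog_succ, partialLog_succ, if_neg (lengthDiff_two_mul_ne_zero hr hk),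
      if_neg (lengthDiff_two_mul_ne_zero hr' hk), h₀.2]
    simp
  obtain rfl | rfl | hm' : m' = 2 * k + 1 ∨ m' = 2 * k + 2 ∨ 2 * k + 3 ≤ m' := by omega
  · exact hne hs
  · have := lengthDiff_eq_zero_of_partialLog_eq hlog le_rfl (Nat.lt_succ_self _)
    exact hne (hs.trans (annPlay_succ_eq_of_lengthDiff_eq_zero this))
  · exact lengthDiff_two_mul_ne_zero hr' (k := k + 1) (by omega)
      (lengthDiff_eq_zero_of_partialLog_eq hlog (by omega) (by omega))

theorem playsAgree_of_reducedLog_eq {M : ℕ} (hr : Admissible τ r M) (hr' : Admissible τ r' M)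
    (hlog : reducedLog τ r M = reducedLog τ r' M) {j : ℕ} (hj : j ≤ 2 * M) :
    PlaysAgree τ r r' j j := by
  rw [reducedLog_eq, reducedLog_eq, Prod.mk.injEq] at hlog
  have hend : PlaysAgree τ r r' (2 * M) (2 * M) := ⟨hlog.2, hlog.1⟩
  induction j with
  | zero => exact ⟨rfl, rfl⟩
  | succ j ih =>
    have ih := ih (by omega)
    refine ih.succ_of_annPlay_eq ?_
    obtain ⟨k, rfl | rfl⟩ := Nat.even_or_odd' j
    · by_contra hne
      obtain ⟨i', hi', hi'M, h⟩ | ⟨i, hi, hiM, h⟩ :=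
        hend.exists_left_or_right_eq (p := 2 * k + 1) (by omega) (by omega)
      · exact not_playsAgree_two_mul_add_one hr hr' ih hne hi' hi'M h
      · exact not_playsAgree_two_mul_add_one hr' hr ih.symm (Ne.symm hne) hi hiM h.symm
    · exact annPlay_succ_eq_of_odd (by omega) ih.1

end Play

theorem reducedLog_injective_general {S : Type*} [DecidableEq S]
    (τ : List S → S) (M : ℕ)
    (r r' : ℕ → S) (hr : Admissible τ r M) (hr' : Admissible τ r' M)
    (hlog : reducedLog τ r M = reducedLog τ r' M) :
    ∀ j < M, r j = r' j := by
  intro k hk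
  have h := congrArg List.getLast? (playsAgree_of_reducedLog_eq hr hr' hlog (j := 2 * k + 1)
    (by omega)).1
  rwa [getLast?_annPlay_two_mul_add_one, getLast?_annPlay_two_mul_add_one, Option.some_inj] at h

/-- Over a finite symbol set of size at least 4, for a fixed strategy `τ` of
Ben and `M ≥ 1`, the map sending an admissible sequence of Ann's choices to its
reduced log is injective. -/
theorem reducedLog_injective {S : Type*} [Fintype S] [DecidableEq S]
    (hS : 4 ≤ Fintype.card S) (τ : List S → S) (M : ℕ) (hM : 1 ≤ M)
    (r r' : ℕ → S) (hr : Admissible τ r M) (hr' : Admissible τ r' M)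
    (hlog : reducedLog τ r M = reducedLog τ r' M) :
    ∀ j < M, r j = r' j :=
  reducedLog_injective_general τ M r r' hr hr' hlog
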